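/- Let Γ be a uniform layered graph with unique minimal vertex. Then gr A(Γ) ≅ T(V^+)/R_gr is a quadratic algebra, and R_gr is generated by the elements v(u−w) over all v ∈ ∪_{i≥2} V_i and u, w ∈ S_1(v) with S_1(u) ∩ S_1(w) ≠ ∅. -/

import Mathlib

noncomputable section

/-- A layered directed graph: vertices come with a rank (layer), and each
edge goes from a vertex of rank `j+1` to a vertex of rank `j`. -/
structure LayeredGraph where
  V : Type
  E : Type
  rank : V → ℕ
  tail : E → V
  head : E → V
  rank_tail : ∀ e, rank (tail e) = rank (head e) + 1

namespace LayeredGraph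

variable (G : LayeredGraph)

/-- `V₀ = {*}`: there is a unique vertex of rank `0`. -/
def HasUniqueMin : Prop := ∃ s : G.V, G.rank s = 0 ∧ ∀ v, G.rank v = 0 → v = s

/-- Every vertex of `V⁺` has at least one outgoing edge. -/
def EdgeFull : Prop := ∀ v, G.rank v ≠ 0 → ∃ e, G.tail e = v

/-- `u` covers `w`: there is an edge from `u` to `w`. -/
def adj (u w : G.V) : Prop := ∃ e, G.tail e = u ∧ G.head e = w

/-- `v ≥ u` with a prescribed rank drop `j` (this is `u ∈ S_j(v)`;
for `j = 0` it forces `u = v`). -/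
def SRel (v u : G.V) (j : ℕ) : Prop :=
  Relation.ReflTransGen G.adj v u ∧ G.rank u + j = G.rank v

/-- A uniform layered graph: for each vertex `v` of rank `≥ 2`, all elements of
`S₁(v)` are equivalent under the equivalence relation generated by
`u ∼ w ↔ S₁(u) ∩ S₁(w) ≠ ∅`. -/
def Uniform : Prop := ∀ v u w, 2 ≤ G.rank v → G.adj v u → G.adj v w →
  Relation.EqvGen (fun a b => G.adj v a ∧ G.adj v b ∧ ∃ x, G.adj a x ∧ G.adj b x) u w

/-- A (nonempty) directed path: a nonempty list of composable edges. -/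
def IsPathList (l : List G.E) : Prop :=
  l ≠ [] ∧ l.Chain' (fun e f => G.head e = G.tail f)

/-- The tail (initial vertex) of a path, as an `Option`. -/
def firstV (l : List G.E) : Option G.V := l.head?.map G.tail

/-- The head (final vertex) of a path, as an `Option`. -/
def lastV (l : List G.E) : Option G.V := l.getLast?.map G.head

/-- The list `v₀, v₁, …, v_m` of vertices visited by a path. -/
def pathVerts (l : List G.E) : List G.V :=
  match l with
  | [] => []
  | e :: _ => G.tail e :: l.map G.head

/-- The type `V⁺` of vertices of positive rank. -/
def Vp := {v : G.V // G.rank v ≠ 0}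

variable (F : Type) [Field F]

/-- The coefficient `e(π,k)` of `t^k` in `P_π(t) = (1 - te₁)⋯(1 - te_m)`,
an element of the tensor algebra `T(E)` (modelled as the free algebra on `E`). -/
def ecoef (π : List G.E) (k : ℕ) : FreeAlgebra F G.E :=
  ((-1 : F) ^ k) • ((π.sublistsLen k).map fun l => (l.map (FreeAlgebra.ι F)).prod).sum

/-- The two-sided ideal generated by a set, as a submodule. -/
def twoSidedSpan {A : Type} [Ring A] [Algebra F A] (S : Set A) : Submodule F A :=
  Submodule.span F {x | ∃ a s b, s ∈ S ∧ x = a * s * b}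

/-- The defining ideal `R` of `A(Γ)`, generated by the differences
`e(π₁,k) - e(π₂,k)` over pairs of paths with the same tail and the same head. -/
def Rideal : Submodule F (FreeAlgebra F G.E) :=
  twoSidedSpan F {x | ∃ π₁ π₂ k, G.IsPathList π₁ ∧ G.IsPathList π₂ ∧
    G.firstV π₁ = G.firstV π₂ ∧ G.lastV π₁ = G.lastV π₂ ∧
    1 ≤ k ∧ k ≤ π₁.length ∧ x = G.ecoef F π₁ k - G.ecoef F π₂ k}

/-- A vertex viewed in `T(V⁺)` (the free algebra on `V⁺`), with `*` sent to `0`. -/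
def vert (v : G.V) : FreeAlgebra F G.Vp :=
  if h : G.rank v = 0 then 0 else FreeAlgebra.ι F (⟨v, h⟩ : G.Vp)

/-- The algebra homomorphism `θ : T(E) → T(V⁺)`, induced by `e ↦ t(e) - h(e)`. -/
def theta : FreeAlgebra F G.E →ₐ[F] FreeAlgebra F G.Vp :=
  FreeAlgebra.lift F fun e => G.vert F (G.tail e) - G.vert F (G.head e)

/-- The filtration `T(E)_i` of `T(E)`, where an edge `e` has degree `|t(e)|`. -/
def filtE (i : ℕ) : Submodule F (FreeAlgebra F G.E) :=
  Submodule.span F {x | ∃ l : List G.E, (l.map fun e => G.rank (G.tail e)).sum ≤ i ∧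
    x = (l.map (FreeAlgebra.ι F)).prod}

/-- The homogeneous component `T(V⁺)_[i]` of `T(V⁺)`,
where a vertex has degree equal to its rank. -/
def homogV (i : ℕ) : Submodule F (FreeAlgebra F G.Vp) :=
  Submodule.span F {x | ∃ l : List G.Vp, (l.map fun p => G.rank p.1).sum = i ∧
    x = (l.map (FreeAlgebra.ι F)).prod}

/-- The filtration `T(V⁺)_i` of `T(V⁺)` induced by the vertex grading. -/
def filtV (i : ℕ) : Submodule F (FreeAlgebra F G.Vp) :=
  Submodule.span F {x | ∃ l : List G.Vp, (l.map fun p => G.rank p.1).sum ≤ i ∧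
    x = (l.map (FreeAlgebra.ι F)).prod}

/-- The associated graded ideal `gr I` of an ideal `I ⊆ T(V⁺)`: its degree-`k`
component is `T(V⁺)_[k] ∩ (T(V⁺)_{k-1} + I)`. -/
def grIdeal (I : Submodule F (FreeAlgebra F G.Vp)) : Submodule F (FreeAlgebra F G.Vp) :=
  ⨆ k, G.homogV F k ⊓ ((⨆ j, ⨆ _ : j < k, G.homogV F j) ⊔ I)

/-- The monomial `v(π,k) = v₀v₁⋯v_{k-1} ∈ T(V⁺)` attached to a path `π`. -/
def vmon (π : List G.E) (k : ℕ) : FreeAlgebra F G.Vp :=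
  (((G.pathVerts π).take k).map (G.vert F)).prod

/-- The ideal `R_gr ⊆ T(V⁺)`, generated by the differences `v(π₁,k) - v(π₂,k)`
over pairs of paths with common tail. -/
def Rgr : Submodule F (FreeAlgebra F G.Vp) :=
  twoSidedSpan F {x | ∃ π₁ π₂ k, G.IsPathList π₁ ∧ G.IsPathList π₂ ∧
    G.firstV π₁ = G.firstV π₂ ∧ 2 ≤ k ∧ k ≤ π₁.length ∧ k ≤ π₂.length ∧
    x = G.vmon F π₁ k - G.vmon F π₂ k}

/-- The degree-one subspace `V = F·V⁺ ⊆ T(V⁺)`. -/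
def Wone : Submodule F (FreeAlgebra F G.Vp) :=
  Submodule.span F (Set.range (FreeAlgebra.ι F))

/-- The quadratic relation space `R` of `gr A(Γ)`,
spanned by the elements `v(u - w)` with `u, w ∈ S₁(v)`. -/
def Rquad : Submodule F (FreeAlgebra F G.Vp) :=
  Submodule.span F {x | ∃ v u w, G.adj v u ∧ G.adj v w ∧
    x = G.vert F v * (G.vert F u - G.vert F w)}

/-- `S_j(v) = span{u : v > u, |u| = |v| - j}` (with `S₀(v) = span{v}`). -/
def Sspan (j : ℕ) (v : G.V) : Submodule F (FreeAlgebra F G.Vp) :=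
  Submodule.span F {x | ∃ u, G.SRel v u j ∧ x = G.vert F u}

/-- `P_j(v) = span{u - w : v > u, v > w, |u| = |w| = |v| - j}`. -/
def Pspan (j : ℕ) (v : G.V) : Submodule F (FreeAlgebra F G.Vp) :=
  Submodule.span F {x | ∃ u w, G.SRel v u j ∧ G.SRel v w j ∧
    x = G.vert F u - G.vert F w}

end LayeredGraph

/-- The elements of the sublattice generated by a family of subspaces. -/
inductive latGen {α : Type*} [Lattice α] (S : Set α) : α → Prop
  | base {x} : x ∈ S → latGen S x
  | inf {x y} : latGen S x → latGen S y → latGen S (x ⊓ y)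
  | sup {x y} : latGen S x → latGen S y → latGen S (x ⊔ y)

/-- A family of elements of a lattice is distributive if the sublattice
it generates is distributive. -/
def IsDistribFamily {α : Type*} [Lattice α] (S : Set α) : Prop :=
  ∀ x y z, latGen S x → latGen S y → latGen S z → x ⊓ (y ⊔ z) = (x ⊓ y) ⊔ (x ⊓ z)

/-- Backelin's criterion: a quadratic algebra `T(V)/(R)` (given by the degree-one
subspace `V` and the relation space `R ⊆ V⊗V` inside the tensor algebra) is Koszul
iff for each `k` the collection of subspaces `V^i R V^(k-i)` generates a
distributive lattice. -/
def IsKoszulQuad (F : Type) [Field F] {A : Type} [Ring A] [Algebra F A]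
    (W R : Submodule F A) : Prop :=
  ∀ k : ℕ, IsDistribFamily {X | ∃ i ≤ k, X = W ^ i * R * W ^ (k - i)}

end

noncomputable section AuxProof

namespace LayeredGraph

variable (G : LayeredGraph) (F : Type) [Field F]

lemma mem_twoSidedSpan_self {A : Type} [Ring A] [Algebra F A] {S : Set A} {s : A}
    (hs : s ∈ S) : s ∈ twoSidedSpan F S :=
  Submodule.subset_span ⟨1, s, 1, hs, by simp⟩

lemma mul_mem_twoSidedSpan {A : Type} [Ring A] [Algebra F A] {S : Set A} (a b : A) {x : A}
    (hx : x ∈ twoSidedSpan F S) : a * x * b ∈ twoSidedSpan F S := by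
  induction hx using Submodule.span_induction with
  | mem y hy =>
      obtain ⟨a', s, b', hs, rfl⟩ := hy
      exact Submodule.subset_span ⟨a * a', s, b' * b, hs, by noncomm_ring⟩
  | zero => simp
  | add y z _ _ hy hz =>
      have := Submodule.add_mem _ hy hz
      simpa [mul_add, add_mul] using this
  | smul c y _ hy =>
      have := Submodule.smul_mem _ c hy
      simpa [mul_smul_comm, smul_mul_assoc] using this

lemma twoSidedSpan_le {A : Type} [Ring A] [Algebra F A] {S : Set A} {T : Submodule F A}
    (hT : ∀ a b x, x ∈ T → a * x * b ∈ T) (hS : S ⊆ (T : Set A)) :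
    twoSidedSpan F S ≤ T := by
  refine Submodule.span_le.2 ?_
  rintro x ⟨a, s, b, hs, rfl⟩
  exact hT a b s (hS hs)

lemma adj_rank {u w : G.V} (h : G.adj u w) : G.rank u = G.rank w + 1 := by
  obtain ⟨e, rfl, rfl⟩ := h; exact G.rank_tail e

lemma chain_length_le_rank : ∀ (L : List G.V) (v : G.V),
    List.Chain G.adj v L → L.length ≤ G.rank v
  | [], v, _ => by simp
  | u :: T, v, h => by
      rcases List.chain_cons.mp h with ⟨h1, h2⟩
      have hT := chain_length_le_rank T u h2
      have hr := G.adj_rank h1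
      simp only [List.length_cons]
      omega

lemma exists_chain (hfull : G.EdgeFull) : ∀ (j : ℕ) (v : G.V), j ≤ G.rank v →
    ∃ L : List G.V, List.Chain G.adj v L ∧ L.length = j
  | 0, v, _ => ⟨[], List.Chain.nil, rfl⟩
  | j + 1, v, h => by
      obtain ⟨e, he⟩ := hfull v (by omega)
      have hr : G.rank v = G.rank (G.head e) + 1 := by
        have := G.rank_tail e; rw [he] at this; exact this
      obtain ⟨L, hL, hlen⟩ := exists_chain hfull j (G.head e) (by omega)
      exact ⟨G.head e :: L, List.chain_cons.mpr ⟨⟨e, he, rfl⟩, hL⟩, by simp [hlen]⟩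

lemma chain_take {α : Type*} {R : α → α → Prop} : ∀ (L : List α) (v : α) (j : ℕ),
    List.Chain R v L → List.Chain R v (L.take j)
  | [], v, j, h => by simpa using h
  | a :: T, v, 0, h => by simp; exact List.Chain.nil
  | a :: T, v, j + 1, h => by
      rcases List.chain_cons.mp h with ⟨h1, h2⟩
      rw [List.take_succ_cons]
      exact List.chain_cons.mpr ⟨h1, chain_take T a j h2⟩

lemma eqvgen_endpoints {α : Type*} {R : α → α → Prop} {P : α → Prop}
    (hR : ∀ a b, R a b → P a ∧ P b) : ∀ {a b : α}, Relation.EqvGen R a b →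
      a = b ∨ (P a ∧ P b) := by
  intro a b h
  induction h with
  | rel a b hab => exact Or.inr (hR a b hab)
  | refl a => exact Or.inl rfl
  | symm a b _ ih =>
      rcases ih with h | h
      · exact Or.inl h.symm
      · exact Or.inr ⟨h.2, h.1⟩
  | trans a b c _ _ ih1 ih2 =>
      rcases ih1 with rfl | h1
      · exact ih2
      · rcases ih2 with rfl | h2
        · exact Or.inr h1
        · exact Or.inr ⟨h1.1, h2.2⟩

/-- The quadratic generating set of the statement. -/
def QgenSet : Set (FreeAlgebra F G.Vp) :=
  {x | ∃ v u w, 2 ≤ G.rank v ∧ G.adj v u ∧ G.adj v w ∧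
    (∃ y, G.adj u y ∧ G.adj w y) ∧
    x = G.vert F v * (G.vert F u - G.vert F w)}

/-- Key lemma: products along two vertex chains with common top differ by an
element of the quadratic ideal. -/
lemma chain_sub_mem (hu : G.Uniform) (hfull : G.EdgeFull) :
    ∀ (n : ℕ) (v : G.V) (L₁ L₂ : List G.V), List.Chain G.adj v L₁ → List.Chain G.adj v L₂ →
      L₁.length = n → L₂.length = n →
      ((v :: L₁).map (G.vert F)).prod - ((v :: L₂).map (G.vert F)).prod ∈
        twoSidedSpan F (G.QgenSet F) := by
  intro n
  induction n with
  | zero =>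
      intro v L₁ L₂ _ _ h1 h2
      rw [List.length_eq_zero_iff] at h1 h2
      subst h1; subst h2; simp
  | succ m IH =>
      intro v L₁ L₂ hc1 hc2 h1 h2
      obtain ⟨a, S₁, rfl⟩ : ∃ a S, L₁ = a :: S := by
        cases L₁ with
        | nil => simp at h1
        | cons a S => exact ⟨a, S, rfl⟩
      obtain ⟨b, S₂, rfl⟩ : ∃ b S, L₂ = b :: S := by
        cases L₂ with
        | nil => simp at h2
        | cons b S => exact ⟨b, S, rfl⟩
      rcases List.chain_cons.mp hc1 with ⟨hva, hS1⟩
      rcases List.chain_cons.mp hc2 with ⟨hvb, hS2⟩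
      simp only [List.length_cons, Nat.succ.injEq] at h1 h2
      by_cases h2v : 2 ≤ G.rank v
      · -- use uniformity
        have key : ∀ p q : G.V,
            Relation.EqvGen (fun x y => G.adj v x ∧ G.adj v y ∧
              ∃ z, G.adj x z ∧ G.adj y z) p q →
            ∀ T₁ T₂ : List G.V, List.Chain G.adj p T₁ → List.Chain G.adj q T₂ →
              T₁.length = m → T₂.length = m →
              ((v :: p :: T₁).map (G.vert F)).prod -
                ((v :: q :: T₂).map (G.vert F)).prod ∈
                  twoSidedSpan F (G.QgenSet F) := by
          intro p q h
          induction h with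
          | rel p q hpq =>
              intro T₁ T₂ hT1 hT2 hl1 hl2
              obtain ⟨hvp, hvq, z, hpz, hqz⟩ := hpq
              have hgen : G.vert F v * (G.vert F p - G.vert F q) ∈ G.QgenSet F :=
                ⟨v, p, q, h2v, hvp, hvq, ⟨z, hpz, hqz⟩, rfl⟩
              rcases Nat.eq_zero_or_pos m with hm | hm
              · subst hm
                rw [List.length_eq_zero_iff] at hl1 hl2
                subst hl1; subst hl2
                have heq : ((v :: p :: ([] : List G.V)).map (G.vert F)).prod -
                    ((v :: q :: ([] : List G.V)).map (G.vert F)).prod =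
                    G.vert F v * (G.vert F p - G.vert F q) := by
                  simp [mul_sub]
                rw [heq]
                exact LayeredGraph.mem_twoSidedSpan_self F hgen
              · -- m ≥ 1 : route through the common child z
                have hrp : G.rank p = G.rank z + 1 := G.adj_rank hpz
                have hT1r : T₁.length ≤ G.rank p := G.chain_length_le_rank T₁ p hT1
                obtain ⟨E, hE, hElen⟩ := G.exists_chain hfull (m - 1) z (by omega)
                have hzE : List.Chain G.adj p (z :: E) :=
                  List.chain_cons.mpr ⟨hpz, hE⟩
                have hzElen : (z :: E).length = m := by simp [hElen]; omega
                have t1 : ((v :: p :: T₁).map (G.vert F)).prod -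
                    ((v :: p :: z :: E).map (G.vert F)).prod ∈
                      twoSidedSpan F (G.QgenSet F) := by
                  have hd := IH p T₁ (z :: E) hT1 hzE hl1 hzElen
                  have := LayeredGraph.mul_mem_twoSidedSpan F (G.vert F v) 1 hd
                  simpa [List.map_cons, List.prod_cons, mul_sub, mul_one] using this
                have t2 : ((v :: p :: z :: E).map (G.vert F)).prod -
                    ((v :: q :: z :: E).map (G.vert F)).prod ∈
                      twoSidedSpan F (G.QgenSet F) := by
                  have := LayeredGraph.mul_mem_twoSidedSpan F 1 (((z :: E).map (G.vert F)).prod)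
                    (LayeredGraph.mem_twoSidedSpan_self F hgen)
                  have heq : 1 * (G.vert F v * (G.vert F p - G.vert F q)) *
                      (((z :: E).map (G.vert F)).prod) =
                      ((v :: p :: z :: E).map (G.vert F)).prod -
                        ((v :: q :: z :: E).map (G.vert F)).prod := by
                    simp only [List.map_cons, List.prod_cons]
                    noncomm_ring
                  rwa [heq] at this
                have t3 : ((v :: q :: z :: E).map (G.vert F)).prod -
                    ((v :: q :: T₂).map (G.vert F)).prod ∈
                      twoSidedSpan F (G.QgenSet F) := by
                  have hd := IH q (z :: E) T₂ (List.chain_cons.mpr ⟨hqz, hE⟩) hT2 hzElen hl2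
                  have := LayeredGraph.mul_mem_twoSidedSpan F (G.vert F v) 1 hd
                  simpa [List.map_cons, List.prod_cons, mul_sub, mul_one] using this
                have := Submodule.add_mem _ (Submodule.add_mem _ t1 t2) t3
                rw [sub_add_sub_cancel, sub_add_sub_cancel] at this
                exact this
          | refl p =>
              intro T₁ T₂ hT1 hT2 hl1 hl2
              have hd := IH p T₁ T₂ hT1 hT2 hl1 hl2
              have := LayeredGraph.mul_mem_twoSidedSpan F (G.vert F v) 1 hd
              simpa [List.map_cons, List.prod_cons, mul_sub, mul_one] using this
          | symm p q _ ih =>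
              intro T₁ T₂ hT1 hT2 hl1 hl2
              rw [← neg_sub]
              exact Submodule.neg_mem _ (ih T₂ T₁ hT2 hT1 hl2 hl1)
          | trans p q r hpq _ ih1 ih2 =>
              intro T₁ T₂ hT1 hT2 hl1 hl2
              have hends := LayeredGraph.eqvgen_endpoints (P := fun x => G.adj v x)
                (fun a b hab => ⟨hab.1, hab.2.1⟩) hpq
              rcases hends with rfl | ⟨hvp, hvq⟩
              · exact ih2 T₁ T₂ hT1 hT2 hl1 hl2
              · have hrp : G.rank v = G.rank p + 1 := G.adj_rank hvp
                have hrq : G.rank v = G.rank q + 1 := G.adj_rank hvq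
                have hT1r : T₁.length ≤ G.rank p := G.chain_length_le_rank T₁ p hT1
                obtain ⟨E, hE, hElen⟩ := G.exists_chain hfull m q (by omega)
                have := Submodule.add_mem _ (ih1 T₁ E hT1 hE hl1 hElen)
                  (ih2 E T₂ hE hT2 hElen hl2)
                rwa [sub_add_sub_cancel] at this
        exact key a b (hu v a b h2v hva hvb) S₁ S₂ hS1 hS2 h1 h2
      · -- rank v ≤ 1 : everything vanishes
        have hra : G.rank v = G.rank a + 1 := G.adj_rank hva
        have hrb : G.rank v = G.rank b + 1 := G.adj_rank hvb
        have hm1 : S₁.length ≤ G.rank a := G.chain_length_le_rank S₁ a hS1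
        have ha0 : G.rank a = 0 := by omega
        have hb0 : G.rank b = 0 := by omega
        simp [LayeredGraph.vert, ha0, hb0]

lemma chain_pathVerts : ∀ (e : G.E) (t : List G.E),
    (e :: t).Chain' (fun e f => G.head e = G.tail f) →
    List.Chain G.adj (G.tail e) ((e :: t).map G.head)
  | e, [], _ => by
      simp only [List.map_cons, List.map_nil]
      exact List.chain_cons.mpr ⟨⟨e, rfl, rfl⟩, List.Chain.nil⟩
  | e, f :: t, h => by
      rcases List.isChain_cons_cons.mp h with ⟨h1, h2⟩
      have ih := chain_pathVerts f t h2
      rw [← h1] at ih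
      simp only [List.map_cons] at ih ⊢
      exact List.chain_cons.mpr ⟨⟨e, rfl, rfl⟩, ih⟩

end LayeredGraph

end AuxProof

/-- Proposition 3.6: for a uniform layered graph with unique minimal
vertex, `gr A(Γ) ≅ T(V⁺)/R_gr` is quadratic: `R_gr` is generated by the
elements `v(u-w)` over `v ∈ ∪_{i≥2} V_i` and `u,w ∈ S₁(v)` with
`S₁(u) ∩ S₁(w) ≠ ∅`. -/
theorem Rgr_quadratic_generation (G : LayeredGraph) (F : Type) [Field F]
    (hu : G.Uniform) (hmin : G.HasUniqueMin) (hfull : G.EdgeFull) :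
    G.Rgr F = LayeredGraph.twoSidedSpan F
      {x : FreeAlgebra F G.Vp | ∃ v u w, 2 ≤ G.rank v ∧ G.adj v u ∧ G.adj v w ∧
        (∃ y, G.adj u y ∧ G.adj w y) ∧
        x = G.vert F v * (G.vert F u - G.vert F w)} := by
  have hQ : LayeredGraph.twoSidedSpan F
      {x : FreeAlgebra F G.Vp | ∃ v u w, 2 ≤ G.rank v ∧ G.adj v u ∧ G.adj v w ∧
        (∃ y, G.adj u y ∧ G.adj w y) ∧
        x = G.vert F v * (G.vert F u - G.vert F w)} =
      LayeredGraph.twoSidedSpan F (G.QgenSet F) := rfl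
  rw [hQ]
  apply le_antisymm
  · -- Rgr ≤ quadratic ideal
    apply LayeredGraph.twoSidedSpan_le F
      (fun a b x hx => LayeredGraph.mul_mem_twoSidedSpan F a b hx)
    rintro x ⟨π₁, π₂, k, hp1, hp2, hfv, hk2, hk1, hk1', rfl⟩
    obtain ⟨e, t, rfl⟩ : ∃ e t, π₁ = e :: t := by
      cases π₁ with
      | nil => exact absurd rfl hp1.1
      | cons e t => exact ⟨e, t, rfl⟩
    obtain ⟨f, s, rfl⟩ : ∃ f s, π₂ = f :: s := by
      cases π₂ with
      | nil => exact absurd rfl hp2.1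
      | cons f s => exact ⟨f, s, rfl⟩
    have htail : G.tail e = G.tail f := by
      simpa [LayeredGraph.firstV] using hfv
    obtain ⟨k', rfl⟩ : ∃ k', k = k' + 1 := ⟨k - 1, by omega⟩
    have hc1 : List.Chain G.adj (G.tail e) (((e :: t).map G.head).take k') :=
      LayeredGraph.chain_take _ _ _ (G.chain_pathVerts e t hp1.2)
    have hc2' : List.Chain G.adj (G.tail f) (((f :: s).map G.head).take k') :=
      LayeredGraph.chain_take _ _ _ (G.chain_pathVerts f s hp2.2)
    rw [← htail] at hc2'
    have hl1 : (((e :: t).map G.head).take k').length = k' := by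
      simp only [List.length_take, List.length_map, List.length_cons]
      simp only [List.length_cons] at hk1
      omega
    have hl2 : (((f :: s).map G.head).take k').length = k' := by
      simp only [List.length_take, List.length_map, List.length_cons]
      simp only [List.length_cons] at hk1'
      omega
    have hmem := G.chain_sub_mem F hu hfull k' (G.tail e) _ _ hc1 hc2' hl1 hl2
    have heq : G.vmon F (e :: t) (k' + 1) - G.vmon F (f :: s) (k' + 1) =
        ((G.tail e :: ((e :: t).map G.head).take k').map (G.vert F)).prod -
          ((G.tail e :: ((f :: s).map G.head).take k').map (G.vert F)).prod := by
      simp only [LayeredGraph.vmon, LayeredGraph.pathVerts, List.take_succ_cons,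
        List.map_cons, List.prod_cons]
      rw [htail]
    rw [heq]
    exact hmem
  · -- quadratic ideal ≤ Rgr
    apply LayeredGraph.twoSidedSpan_le F
      (fun a b x hx => LayeredGraph.mul_mem_twoSidedSpan F a b hx)
    rintro x ⟨v, u, w, h2, ⟨e1, he1t, he1h⟩, ⟨e2, he2t, he2h⟩,
      ⟨y, ⟨e3, he3t, he3h⟩, ⟨e4, he4t, he4h⟩⟩, rfl⟩
    apply LayeredGraph.mem_twoSidedSpan_self F
    refine ⟨[e1, e3], [e2, e4], 2, ⟨by simp, ?_⟩, ⟨by simp, ?_⟩, ?_, le_refl 2,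
      by simp, by simp, ?_⟩
    · simp only [List.Chain', List.isChain_cons_cons, List.isChain_singleton, and_true]
      rw [he1h, he3t]
    · simp only [List.Chain', List.isChain_cons_cons, List.isChain_singleton, and_true]
      rw [he2h, he4t]
    · simp [LayeredGraph.firstV, he1t, he2t]
    · simp [LayeredGraph.vmon, LayeredGraph.pathVerts, he1t, he1h, he2t, he2h, mul_sub]
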